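/- arXiv:2507.17631 — 2 statements merged into one kernel-verified Lean document; each statement's English description precedes it below -/
import Mathlib

section
/- For every n ≥ 0, the sequence 0 → M_tor^{(n)}/E → M^{(n)}/E → M_tf^{(n)}/E → 0 is exact, where N^{(n)} = 𝔖 ⊗_{𝔖,φ^n} N and N/E = N/EN. Moreover, passing to p-power torsion submodules, the sequence 0 → M_tor^{(n)}/E → (M^{(n)}/E)[p^∞] → (M_tf^{(n)}/E)[p^∞] → 0 is also exact. -/
noncomputable section

variable {R : Type*} [CommRing R]

/-- A copy of `R` regarded as a module over `R` through the ring endomorphism `ψ`. -/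
def TwBase (ψ : R →+* R) : Type _ := R

instance (ψ : R →+* R) : CommRing (TwBase ψ) := inferInstanceAs (CommRing R)
instance (ψ : R →+* R) : Module R (TwBase ψ) := Module.compHom R ψ

/-- The base change (Frobenius twist) `ψ^*M = R ⊗_{R,ψ} M` of a module `M` along `ψ`. -/
def Twist (ψ : R →+* R) (M : Type*) [AddCommGroup M] [Module R M] : Type _ :=
  TensorProduct R (TwBase ψ) M

instance (ψ : R →+* R) (M : Type*) [AddCommGroup M] [Module R M] :
    AddCommGroup (Twist ψ M) :=
  inferInstanceAs (AddCommGroup (TensorProduct R (TwBase ψ) M))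

instance (ψ : R →+* R) (M : Type*) [AddCommGroup M] [Module R M] : Module R (Twist ψ M) :=
  inferInstanceAs (Module R (TensorProduct R (TwBase ψ) M))

/-- Multiplication by `a` on the left factor of the twist, as an `R`-linear map on `TwBase ψ`. -/
def twMulBase (ψ : R →+* R) (a : R) : TwBase ψ →ₗ[R] TwBase ψ where
  toFun x := Mul.mul a x
  map_add' x y := mul_add a x y
  map_smul' r x := mul_left_comm a (ψ r) x

/-- "Target" multiplication by `a ∈ R` on the twist `ψ^*M`; this realises the natural
module structure of the base change over the target copy of `R`. -/
def twistSMul (ψ : R →+* R) (a : R) (M : Type*) [AddCommGroup M] [Module R M] :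
    Twist ψ M →ₗ[R] Twist ψ M :=
  TensorProduct.map (twMulBase ψ a) LinearMap.id

/-- Functoriality of the twist: the map `ψ^*f : ψ^*M → ψ^*N` induced by `f : M → N`. -/
def twistMap (ψ : R →+* R) {M N : Type*} [AddCommGroup M] [Module R M]
    [AddCommGroup N] [Module R N] (f : M →ₗ[R] N) : Twist ψ M →ₗ[R] Twist ψ N :=
  LinearMap.lTensor (TwBase ψ) f

/-- The `n`-th iterate of a ring endomorphism, as a ring homomorphism. -/
def iterateHom (σ : R →+* R) : ℕ → R →+* R
  | 0 => RingHom.id R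
  | n + 1 => σ.comp (iterateHom σ n)

/-- The submodule of elements killed by a power of `r`. -/
def pPrim (r : R) (M : Type*) [AddCommGroup M] [Module R M] : Submodule R M where
  carrier := {x | ∃ n : ℕ, r ^ n • x = 0}
  zero_mem' := ⟨0, smul_zero _⟩
  add_mem' := by
    rintro a b ⟨na, ha⟩ ⟨nb, hb⟩
    refine ⟨na + nb, ?_⟩
    have h1 : r ^ (na + nb) • a = 0 := by
      rw [pow_add, mul_comm, mul_smul, ha, smul_zero]
    have h2 : r ^ (na + nb) • b = 0 := by
      rw [pow_add, mul_smul, hb, smul_zero]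
    rw [smul_add, h1, h2, add_zero]
  smul_mem' := by
    rintro c x ⟨n, hn⟩
    exact ⟨n, by rw [smul_comm, hn, smul_zero]⟩

end

/-! Since `φ` sends `u` to `u^p` and acts on coefficients by the bijective Witt Frobenius,
`𝔖` is free over itself via `φⁿ` with basis `1, u, …, u^{pⁿ-1}`. Hence twisting is exact, and
`0 → M_tor^{(n)} → M^{(n)} → M_tf^{(n)} → 0` is exact. Multiplication by `E` is injective on
`M_tf^{(n)}`, because `M_tf` embeds into its (flat) localisation at the nonzero elements and the
twist preserves this embedding. The snake lemma then gives the sequence of cokernels of `E`.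
Finally `M_tor^{(n)}/E` is killed by a power of `p`, so every lift of a `p`-power torsion element
of `M_tf^{(n)}/E` is itself `p`-power torsion. -/

open Function

namespace PowerSeries

variable {A : Type*} [CommRing A]

/-- `ψ` is the substitution `f(X) ↦ f^τ(X^q)`, i.e. `ψ (∑ aₘ Xᵐ) = ∑ τ(aₘ) X^{qm}`. -/
def IsTwistedExpand (ψ : A⟦X⟧ →+* A⟦X⟧) (τ : A →+* A) (q : ℕ) : Prop :=
  ∀ f m, coeff m (ψ f) = if q ∣ m then τ (coeff (m / q) f) else 0

namespace IsTwistedExpand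

variable {ψ ψ' : A⟦X⟧ →+* A⟦X⟧} {τ τ' : A →+* A} {q q' : ℕ}

lemma id : IsTwistedExpand (RingHom.id A⟦X⟧) (RingHom.id A) 1 := by
  intro f m
  simp

lemma comp (hψ : IsTwistedExpand ψ τ q) (hψ' : IsTwistedExpand ψ' τ' q') :
    IsTwistedExpand (ψ'.comp ψ) (τ'.comp τ) (q' * q) := by
  intro f m
  rw [RingHom.comp_apply, hψ']
  by_cases hm : q' ∣ m
  · rw [if_pos hm, hψ]
    simp only [Nat.dvd_div_iff_mul_dvd hm, Nat.div_div_eq_div_mul]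
    split_ifs <;> simp
  · rw [if_neg hm, if_neg fun h => hm (dvd_of_mul_right_dvd h)]

lemma iterate (hψ : IsTwistedExpand ψ τ q) (n : ℕ) :
    IsTwistedExpand (iterateHom ψ n) (iterateHom τ n) (q ^ n) := by
  induction n with
  | zero => exact id
  | succ n ih =>
    rw [pow_succ']
    exact ih.comp hψ

lemma coeff_sum_mul_X_pow (hψ : IsTwistedExpand ψ τ q) (f : Fin q → A⟦X⟧) (i : Fin q) (j : ℕ) :
    coeff (i + q * j) (∑ k, ψ (f k) * X ^ (k : ℕ)) = τ (coeff j (f i)) := by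
  have hq : 0 < q := i.pos
  rw [map_sum, Finset.sum_eq_single i (fun k _ hk => ?_) (by simp), coeff_mul_X_pow',
    if_pos (Nat.le_add_right _ _), Nat.add_sub_cancel_left, hψ, if_pos (dvd_mul_right q j),
    Nat.mul_div_cancel_left j hq]
  rw [coeff_mul_X_pow']
  split_ifs with hki
  · rw [hψ, if_neg fun hd => hk (Fin.ext ?_)]
    have hmod := Nat.mod_eq_of_modEq ((Nat.modEq_iff_dvd' hki).mpr hd).symm k.isLt
    rw [Nat.add_mul_mod_self_left, Nat.mod_eq_of_lt i.isLt] at hmod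
    exact hmod.symm
  · rfl

end IsTwistedExpand

end PowerSeries

section TwistBasis

open PowerSeries

variable {A : Type*} [CommRing A] {ψ : A⟦X⟧ →+* A⟦X⟧} {τ : A →+* A} {q : ℕ}

variable (ψ q) in
/-- Since `A⟦X⟧` acts on `TwBase ψ` through `ψ`, this is `(fᵢ)ᵢ ↦ ∑ ψ(fᵢ) Xⁱ`. -/
noncomputable def twBasePiMap : (Fin q → A⟦X⟧) →ₗ[A⟦X⟧] TwBase ψ :=
  Fintype.linearCombination A⟦X⟧ fun i => (X ^ (i : ℕ) : A⟦X⟧)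

lemma twBasePiMap_bijective (hψ : IsTwistedExpand ψ τ q) (hq : 0 < q) (hτ : Bijective τ) :
    Bijective (twBasePiMap ψ q) := by
  have hcoeff : ∀ f (i : Fin q) j,
      coeff (i + q * j) (twBasePiMap ψ q f : A⟦X⟧) = τ (coeff j (f i)) :=
    hψ.coeff_sum_mul_X_pow
  have hdecomp : ∀ m, ∃ (i : Fin q) (j : ℕ), m = i + q * j := fun m =>
    ⟨⟨m % q, Nat.mod_lt m hq⟩, m / q, (Nat.mod_add_div m q).symm⟩
  refine ⟨(injective_iff_map_eq_zero _).mpr fun f hf => ?_, fun g => ?_⟩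
  · funext i
    ext j
    apply hτ.injective
    rw [← hcoeff, hf, Pi.zero_apply, map_zero, map_zero]
    exact map_zero (coeff _)
  · refine ⟨fun i => mk fun j => surjInv hτ.surjective (coeff (i + q * j) g), ?_⟩
    refine PowerSeries.ext fun m => ?_
    obtain ⟨i, j, rfl⟩ := hdecomp m
    rw [hcoeff, coeff_mk]
    exact surjInv_eq hτ.surjective _

lemma twBase_free (hψ : IsTwistedExpand ψ τ q) (hq : 0 < q) (hτ : Bijective τ) :
    Module.Free A⟦X⟧ (TwBase ψ) :=
  .of_basis (.ofEquivFun (LinearEquiv.ofBijective _ (twBasePiMap_bijective hψ hq hτ)).symm)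

end TwistBasis

lemma iterateHom_bijective {R : Type*} [CommRing R] {σ : R →+* R} (hσ : Bijective σ)
    (n : ℕ) : Bijective (iterateHom σ n) := by
  induction n with
  | zero => exact bijective_id
  | succ n ih => exact hσ.comp ih

lemma LinearMap.rTensor_injective_of_isTorsionFree {R B B' : Type*} [CommRing R] [IsDomain R]
    [AddCommGroup B] [Module R B] [AddCommGroup B'] [Module R B'] [Module.Flat R B]
    {f : B →ₗ[R] B'} (hf : Injective f) (Q : Type*) [AddCommGroup Q] [Module R Q]
    [Module.IsTorsionFree R Q] : Injective (f.rTensor Q) := by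
  let ι := LocalizedModule.mkLinearMap (nonZeroDivisors R) Q
  have hι : Injective ι := (IsLocalizedModule.injective_iff_isRegular _ ι).mpr fun c =>
    (IsRegular.of_ne_zero (nonZeroDivisors.ne_zero c.2)).isSMulRegular
  have : Module.Flat R (LocalizedModule (nonZeroDivisors R) Q) :=
    .trans R (Localization (nonZeroDivisors R)) _
  have hcomm : ι.lTensor B' ∘ₗ f.rTensor Q = f.rTensor _ ∘ₗ ι.lTensor B := by
    rw [lTensor_comp_rTensor, rTensor_comp_lTensor]
  have hinj : Injective (f.rTensor _ ∘ₗ ι.lTensor B) :=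
    (Module.Flat.rTensor_preserves_injective_linearMap f hf).comp
      (Module.Flat.lTensor_preserves_injective_linearMap ι hι)
  rw [← hcomm, coe_comp] at hinj
  exact hinj.of_comp

section Twist

variable {R : Type*} [CommRing R] (ψ : R →+* R) {M N : Type*} [AddCommGroup M] [Module R M]
  [AddCommGroup N] [Module R N]

lemma twistMap_comp_twistSMul (a : R) (f : M →ₗ[R] N) :
    twistMap ψ f ∘ₗ twistSMul ψ a M = twistSMul ψ a N ∘ₗ twistMap ψ f :=
  (LinearMap.lTensor_comp_rTensor _ _ _).trans (LinearMap.rTensor_comp_lTensor _ _ _).symm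

lemma twistSMul_injective [IsDomain R] [Module.Flat R (TwBase ψ)] {a : R} (ha : a ≠ 0)
    (Q : Type*) [AddCommGroup Q] [Module R Q] [Module.IsTorsionFree R Q] :
    Injective (twistSMul ψ a Q) :=
  LinearMap.rTensor_injective_of_isTorsionFree (f := twMulBase ψ a)
    (mul_right_injective₀ ha : Injective (a * · : R → R)) Q

lemma Twist.smul_eq_zero {s : R} (hs : ∀ m : M, s • m = 0) (t : Twist ψ M) : s • t = 0 := by
  suffices ∀ t : TensorProduct R (TwBase ψ) M, s • t = 0 from this t
  intro t
  induction t using TensorProduct.induction_on with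
  | zero => exact smul_zero s
  | tmul x m => rw [← TensorProduct.tmul_smul, hs, TensorProduct.tmul_zero]
  | add t t' ht ht' => rw [smul_add, ht, ht', add_zero]

end Twist

namespace Submodule

section CokernelSequence

variable {R A B C : Type*} [CommRing R] [AddCommGroup A] [Module R A] [AddCommGroup B]
  [Module R B] [AddCommGroup C] [Module R C] {i : A →ₗ[R] B} {π : B →ₗ[R] C}
  {fA : Module.End R A} {fB : Module.End R B} {fC : Module.End R C}

lemma range_le_comap_range_of_comp_eq (h : i ∘ₗ fA = fB ∘ₗ i) :
    LinearMap.range fA ≤ (LinearMap.range fB).comap i := by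
  rw [← map_le_iff_le_comap, ← LinearMap.range_comp, h, LinearMap.range_comp]
  exact LinearMap.map_le_range

lemma injective_mapQ_range (hi : Injective i) (hiπ : Exact i π) (hA : i ∘ₗ fA = fB ∘ₗ i)
    (hB : π ∘ₗ fB = fC ∘ₗ π) (hfC : Injective fC) :
    Injective ((LinearMap.range fA).mapQ _ i (range_le_comap_range_of_comp_eq hA)) := by
  rw [← LinearMap.ker_eq_bot, ker_mapQ, eq_bot_iff, map_le_iff_le_comap, comap_bot, ker_mkQ]
  rintro a ⟨b, hb⟩
  have hπb : π b = 0 := hfC <| by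
    rw [← LinearMap.comp_apply, ← hB, LinearMap.comp_apply, hb, hiπ.apply_apply_eq_zero, map_zero]
  obtain ⟨a', rfl⟩ := (hiπ b).mp hπb
  refine ⟨a', hi ?_⟩
  rw [← LinearMap.comp_apply, hA, LinearMap.comp_apply, hb]

lemma exact_mapQ_range (hiπ : Exact i π) (hπ : Surjective π) (hA : i ∘ₗ fA = fB ∘ₗ i)
    (hB : π ∘ₗ fB = fC ∘ₗ π) :
    Exact ((LinearMap.range fA).mapQ _ i (range_le_comap_range_of_comp_eq hA))
      ((LinearMap.range fB).mapQ _ π (range_le_comap_range_of_comp_eq hB)) := by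
  refine (hiπ.exact_mapQ_iff _ _).mpr ?_
  rintro - ⟨-, c, rfl⟩
  obtain ⟨b, rfl⟩ := hπ c
  exact ⟨fB b, ⟨b, rfl⟩, LinearMap.congr_fun hB b⟩

lemma surjective_mapQ_range (hπ : Surjective π) (hB : π ∘ₗ fB = fC ∘ₗ π) :
    Surjective ((LinearMap.range fB).mapQ _ π (range_le_comap_range_of_comp_eq hB)) := by
  intro z
  obtain ⟨c, rfl⟩ := mkQ_surjective _ z
  obtain ⟨b, rfl⟩ := hπ c
  exact ⟨mkQ _ b, rfl⟩

end CokernelSequence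

end Submodule

section PPrim

variable {R A B C : Type*} [CommRing R] [AddCommGroup A] [Module R A] [AddCommGroup B]
  [Module R B] [AddCommGroup C] [Module R C] {r : R} {N : ℕ} {f : A →ₗ[R] B} {g : B →ₗ[R] C}

variable (g) in
lemma map_mem_pPrim {y : B} (hy : y ∈ pPrim r B) : g y ∈ pPrim r C :=
  let ⟨n, hn⟩ := hy
  ⟨n, by rw [← map_smul, hn, map_zero]⟩

variable (f) in
lemma map_mem_pPrim_of_pow_smul_eq_zero (hA : ∀ a : A, r ^ N • a = 0) (a : A) :
    f a ∈ pPrim r B :=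
  ⟨N, by rw [← map_smul, hA, map_zero]⟩

lemma exact_pPrim_restrict (hfg : Exact f g) (hA : ∀ a : A, r ^ N • a = 0) :
    Exact (f.codRestrict _ (map_mem_pPrim_of_pow_smul_eq_zero f hA))
      (g.restrict fun _ => map_mem_pPrim (r := r) g) := by
  intro y
  rw [Subtype.ext_iff, LinearMap.restrict_apply, ZeroMemClass.coe_zero, hfg]
  exact exists_congr fun a => by rw [Subtype.ext_iff, LinearMap.codRestrict_apply]

lemma surjective_pPrim_restrict (hfg : Exact f g) (hg : Surjective g)
    (hA : ∀ a : A, r ^ N • a = 0) : Surjective (g.restrict fun _ => map_mem_pPrim (r := r) g) := by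
  rintro ⟨z, m, hm⟩
  obtain ⟨y, rfl⟩ := hg z
  obtain ⟨a, ha⟩ := (hfg (r ^ m • y)).mp (by rw [map_smul, hm])
  refine ⟨⟨y, N + m, ?_⟩, rfl⟩
  rw [pow_add, mul_smul, ← ha, ← map_smul, hA, map_zero]

end PPrim

theorem stmt_12_general {p : ℕ} [Fact p.Prime] {k : Type*} [Field k] [CharP k p] [PerfectField k]
    (σ : PowerSeries (WittVector p k) →+* PowerSeries (WittVector p k))
    (hσ : ∀ (f : PowerSeries (WittVector p k)) (m : ℕ),
      PowerSeries.coeff m (σ f) =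
        if p ∣ m then WittVector.frobenius (PowerSeries.coeff (m / p) f) else 0)
    (E : Polynomial (WittVector p k)) (hE : E.Monic)
    (M : Type*) [AddCommGroup M] [Module (PowerSeries (WittVector p k)) M]
    (htor : ∃ N : ℕ, ∀ x ∈ Submodule.torsion (PowerSeries (WittVector p k)) M,
      (p : PowerSeries (WittVector p k)) ^ N • x = 0)
    (n : ℕ) :
    let 𝔖 := PowerSeries (WittVector p k)
    let ψ := iterateHom σ n
    let Mtor := Submodule.torsion 𝔖 M
    let LE1 := twistSMul ψ (E : 𝔖) Mtor
    let LE2 := twistSMul ψ (E : 𝔖) M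
    let LE3 := twistSMul ψ (E : 𝔖) (M ⧸ Mtor)
    let C1 := Twist ψ Mtor ⧸ LinearMap.range LE1
    let C2 := Twist ψ M ⧸ LinearMap.range LE2
    let C3 := Twist ψ (M ⧸ Mtor) ⧸ LinearMap.range LE3
    ∃ (g1 : C1 →ₗ[𝔖] C2) (g2 : C2 →ₗ[𝔖] C3),
      g1.comp (LinearMap.range LE1).mkQ
          = (LinearMap.range LE2).mkQ.comp (twistMap ψ Mtor.subtype) ∧
      g2.comp (LinearMap.range LE2).mkQ
          = (LinearMap.range LE3).mkQ.comp (twistMap ψ Mtor.mkQ) ∧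
      Function.Injective g1 ∧ Function.Exact g1 g2 ∧ Function.Surjective g2 ∧
      ∃ (t1 : C1 →ₗ[𝔖] pPrim (p : 𝔖) C2) (t2 : pPrim (p : 𝔖) C2 →ₗ[𝔖] pPrim (p : 𝔖) C3),
        (pPrim (p : 𝔖) C2).subtype.comp t1 = g1 ∧
        (pPrim (p : 𝔖) C3).subtype.comp t2 = g2.comp (pPrim (p : 𝔖) C2).subtype ∧
        Function.Injective t1 ∧ Function.Exact t1 t2 ∧ Function.Surjective t2 := by
  intro 𝔖 ψ Mtor LE1 LE2 LE3 C1 C2 C3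
  have : PerfectRing k p := PerfectField.toPerfectRing p
  have : Module.Free 𝔖 (TwBase ψ) :=
    twBase_free (PowerSeries.IsTwistedExpand.iterate hσ n)
      (pow_pos (Fact.out : p.Prime).pos n)
      (iterateHom_bijective (WittVector.frobenius_bijective p k) n)
  have hi : Injective (twistMap ψ Mtor.subtype) :=
    Module.Flat.lTensor_preserves_injective_linearMap _ Mtor.injective_subtype
  have hπ : Surjective (twistMap ψ Mtor.mkQ) := LinearMap.lTensor_surjective _ Mtor.mkQ_surjective
  have hiπ : Exact (twistMap ψ Mtor.subtype) (twistMap ψ Mtor.mkQ) :=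
    lTensor_exact _ (LinearMap.exact_subtype_mkQ Mtor) Mtor.mkQ_surjective
  have hA := twistMap_comp_twistSMul ψ (E : 𝔖) Mtor.subtype
  have hB := twistMap_comp_twistSMul ψ (E : 𝔖) Mtor.mkQ
  have hLE3 : Injective LE3 :=
    twistSMul_injective ψ (Polynomial.coe_eq_zero_iff.not.mpr hE.ne_zero) _
  obtain ⟨N, hN⟩ := htor
  have hC1 : ∀ x : C1, (p : 𝔖) ^ N • x = 0 := by
    intro x
    obtain ⟨t, rfl⟩ := Submodule.mkQ_surjective _ x
    rw [← map_smul, Twist.smul_eq_zero ψ (fun m => Subtype.ext (hN m m.2)), map_zero]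
  have hg1 := Submodule.injective_mapQ_range hi hiπ hA hB hLE3
  have hg12 := Submodule.exact_mapQ_range hiπ hπ hA hB
  have hg2 := Submodule.surjective_mapQ_range hπ hB
  exact ⟨_, _, Submodule.mapQ_mkQ _ _ _, Submodule.mapQ_mkQ _ _ _, hg1, hg12, hg2, _, _,
    LinearMap.subtype_comp_codRestrict _ _ _, LinearMap.subtype_comp_restrict _,
    fun _ _ h => hg1 congr($h), exact_pPrim_restrict hg12 hC1,
    surjective_pPrim_restrict hg12 hg2 hC1⟩

/-- Let `k` be a perfect field of characteristic `p`, `W = W(k)`,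
`𝔖 = W[[u]]` with its Frobenius lift `σ`, `E ∈ W[u]` an Eisenstein polynomial of degree
`e`, `M` a finitely generated `𝔖`-module with torsion submodule `M_tor` killed by a power
of `p`, and `M_tf = M/M_tor`. For every `n ≥ 0` the sequence
`0 → M_tor^{(n)}/E → M^{(n)}/E → M_tf^{(n)}/E → 0` is exact (the maps being the ones
induced by the inclusion and projection after twisting), and, passing to `p`-power
torsion submodules, the sequence
`0 → M_tor^{(n)}/E → (M^{(n)}/E)[p^∞] → (M_tf^{(n)}/E)[p^∞] → 0` is also exact.
Here `N^{(n)} = Twist (iterateHom σ n) N` with `E` acting via `twistSMul`, and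
`N/E` denotes the cokernel of this action. -/
theorem stmt_12 {p : ℕ} [Fact p.Prime] {k : Type*} [Field k] [CharP k p] [PerfectField k]
    (σ : PowerSeries (WittVector p k) →+* PowerSeries (WittVector p k))
    (hσ : ∀ (f : PowerSeries (WittVector p k)) (m : ℕ),
      PowerSeries.coeff m (σ f) =
        if p ∣ m then WittVector.frobenius (PowerSeries.coeff (m / p) f) else 0)
    (E : Polynomial (WittVector p k)) (e : ℕ) (hE : E.Monic) (hdeg : E.natDegree = e)
    (hco : ∀ i < e, (p : WittVector p k) ∣ E.coeff i)
    (hconst : ∃ v : (WittVector p k)ˣ, E.coeff 0 = (p : WittVector p k) * v)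
    (M : Type*) [AddCommGroup M] [Module (PowerSeries (WittVector p k)) M]
    [Module.Finite (PowerSeries (WittVector p k)) M]
    (htor : ∃ N : ℕ, ∀ x ∈ Submodule.torsion (PowerSeries (WittVector p k)) M,
      (p : PowerSeries (WittVector p k)) ^ N • x = 0)
    (n : ℕ) :
    let 𝔖 := PowerSeries (WittVector p k)
    let ψ := iterateHom σ n
    let Mtor := Submodule.torsion 𝔖 M
    let LE1 := twistSMul ψ (E : 𝔖) Mtor
    let LE2 := twistSMul ψ (E : 𝔖) M
    let LE3 := twistSMul ψ (E : 𝔖) (M ⧸ Mtor)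
    let C1 := Twist ψ Mtor ⧸ LinearMap.range LE1
    let C2 := Twist ψ M ⧸ LinearMap.range LE2
    let C3 := Twist ψ (M ⧸ Mtor) ⧸ LinearMap.range LE3
    ∃ (g1 : C1 →ₗ[𝔖] C2) (g2 : C2 →ₗ[𝔖] C3),
      g1.comp (LinearMap.range LE1).mkQ
          = (LinearMap.range LE2).mkQ.comp (twistMap ψ Mtor.subtype) ∧
      g2.comp (LinearMap.range LE2).mkQ
          = (LinearMap.range LE3).mkQ.comp (twistMap ψ Mtor.mkQ) ∧
      Function.Injective g1 ∧ Function.Exact g1 g2 ∧ Function.Surjective g2 ∧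
      ∃ (t1 : C1 →ₗ[𝔖] pPrim (p : 𝔖) C2) (t2 : pPrim (p : 𝔖) C2 →ₗ[𝔖] pPrim (p : 𝔖) C3),
        (pPrim (p : 𝔖) C2).subtype.comp t1 = g1 ∧
        (pPrim (p : 𝔖) C3).subtype.comp t2 = g2.comp (pPrim (p : 𝔖) C2).subtype ∧
        Function.Injective t1 ∧ Function.Exact t1 t2 ∧ Function.Surjective t2 :=
  stmt_12_general σ hσ E hE M htor n
end

section
/- Let T ⊆ F be finitely generated 𝔖-modules with F free, such that Q = F/T is killed by a power of the ideal (p, u). Then for every n ≥ 0 there is a natural isomorphism Q^{(n)}[E] ≅ (T^{(n)}/E)[p^∞], and Q^{(n)}[E] is entirely p-power torsion. Here N^{(n)} = 𝔖 ⊗_{𝔖,φ^n} N. -/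
open Function LinearMap PowerSeries

lemma PowerSeries.C_dvd_of_forall_dvd_coeff {R : Type*} [CommRing R] {c : R} {f : R⟦X⟧}
    (h : ∀ m, c ∣ coeff m f) : C c ∣ f := by
  choose g hg using h
  exact ⟨mk g, PowerSeries.ext fun m => by rw [coeff_C_mul, coeff_mk, hg]⟩

lemma PowerSeries.prime_C {R : Type*} [CommRing R] {c : R} (hc : Prime c) : Prime (C c : R⟦X⟧) := by
  have : (Ideal.span {c}).IsPrime := (Ideal.span_singleton_prime hc.ne_zero).mpr hc
  let Φ := PowerSeries.map (Ideal.Quotient.mk (Ideal.span {c}))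
  have hΦ (f : R⟦X⟧) : Φ f = 0 ↔ C c ∣ f := by
    refine ⟨fun h => C_dvd_of_forall_dvd_coeff fun m => ?_, ?_⟩
    · rw [← Ideal.mem_span_singleton, ← Ideal.Quotient.eq_zero_iff_mem, ← coeff_map, h,
        map_zero]
    · rintro ⟨g, rfl⟩
      rw [map_mul, PowerSeries.map_C, Ideal.Quotient.eq_zero_iff_mem.mpr
        (Ideal.mem_span_singleton_self c), map_zero, zero_mul]
  refine ⟨fun h => hc.ne_zero (by simpa using congrArg constantCoeff h), fun h => hc.not_isUnit ?_,
    fun f g hfg => ?_⟩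
  · simpa using h.map constantCoeff
  · rw [← hΦ, ← hΦ, ← mul_eq_zero, ← map_mul, hΦ]
    exact hfg

lemma dvd_of_dvd_pow_mul_of_prime {R : Type*} [CommRing R] [IsDomain R] {a c : R} (hc : Prime c)
    (ha : ¬ c ∣ a) (m : ℕ) {f : R} (h : a ∣ c ^ m * f) : a ∣ f := by
  induction m generalizing f with
  | zero => simpa using h
  | succ m ih =>
    obtain ⟨g, hg⟩ := h
    obtain ⟨g', rfl⟩ := (hc.dvd_or_dvd ⟨c ^ m * f, by rw [← hg]; ring⟩).resolve_left ha
    exact ih ⟨g', mul_left_cancel₀ hc.ne_zero (by rw [← mul_assoc, ← pow_succ', hg]; ring)⟩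

lemma Polynomial.Monic.not_C_dvd_coe {R : Type*} [CommRing R] {E : Polynomial R} (hE : E.Monic)
    {c : R} (hc : ¬ IsUnit c) : ¬ PowerSeries.C c ∣ (E : R⟦X⟧) := by
  rintro ⟨g, hg⟩
  have := congrArg (PowerSeries.coeff E.natDegree) hg
  rw [Polynomial.coeff_coe, hE.coeff_natDegree, PowerSeries.coeff_C_mul] at this
  exact hc (IsUnit.of_mul_eq_one _ this.symm)

section FrobeniusLift

variable {R : Type*} [CommRing R] {σ : R⟦X⟧ →+* R⟦X⟧} {q : ℕ} {τ : Equiv.Perm R}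

lemma coeff_iterateHom
    (hσ : ∀ f m, coeff m (σ f) = if q ∣ m then τ (coeff (m / q) f) else 0) (n : ℕ) (f : R⟦X⟧)
    (m : ℕ) :
    coeff m (iterateHom σ n f) = if q ^ n ∣ m then (τ ^ n) (coeff (m / q ^ n) f) else 0 := by
  have hτ : τ 0 = 0 := by simpa using (hσ 0 0).symm
  induction n generalizing m with
  | zero => simp [iterateHom]
  | succ n ih =>
    change coeff m (σ (iterateHom σ n f)) = _
    rw [hσ, ih]
    by_cases hqm : q ∣ m
    · have hdvd : q ^ n ∣ m / q ↔ q ^ (n + 1) ∣ m := by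
        rw [Nat.dvd_div_iff_mul_dvd hqm, pow_succ']
      simp only [if_pos hqm, hdvd, Nat.div_div_eq_div_mul, ← pow_succ']
      split_ifs
      · rw [pow_succ' τ, Equiv.Perm.mul_apply]
      · exact hτ
    · rw [if_neg hqm, if_neg fun h => hqm ((dvd_pow_self q n.succ_ne_zero).trans h)]

variable [NeZero q]

lemma coeff_sum_map_mul_X_pow
    (hσ : ∀ f m, coeff m (σ f) = if q ∣ m then τ (coeff (m / q) f) else 0)
    (g : Fin q → R⟦X⟧) (m : ℕ) :
    coeff m (∑ i, σ (g i) * X ^ (i : ℕ)) =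
      τ (coeff (m / q) (g ⟨m % q, Nat.mod_lt m (NeZero.pos q)⟩)) := by
  rw [map_sum, Finset.sum_eq_single ⟨m % q, Nat.mod_lt m (NeZero.pos q)⟩]
  · rw [coeff_mul_X_pow', if_pos (Nat.mod_le m q), hσ, if_pos (Nat.dvd_sub_mod m),
      ← Nat.mul_div_self_eq_mod_sub_self, Nat.mul_div_cancel_left _ (NeZero.pos q)]
  · rintro i - hi
    rw [coeff_mul_X_pow']
    split_ifs with hle
    · rw [hσ, if_neg]
      rintro ⟨t, ht⟩
      refine hi (Fin.ext (?_ : (i : ℕ) = m % q))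
      rw [show m = i + q * t by omega, Nat.add_mul_mod_self_left, Nat.mod_eq_of_lt i.isLt]
    · rfl
  · exact fun h => absurd (Finset.mem_univ _) h

lemma free_twBase_of_coeff
    (hσ : ∀ f m, coeff m (σ f) = if q ∣ m then τ (coeff (m / q) f) else 0) :
    Module.Free R⟦X⟧ (TwBase σ) := by
  let L : (Fin q → R⟦X⟧) →ₗ[R⟦X⟧] TwBase σ :=
    { toFun := fun g => ∑ i, σ (g i) * X ^ (i : ℕ)
      map_add' := fun g h => by
        change (∑ i, σ (g i + h i) * X ^ (i : ℕ) : R⟦X⟧) =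
          ∑ i, σ (g i) * X ^ (i : ℕ) + ∑ i, σ (h i) * X ^ (i : ℕ)
        simp only [map_add, add_mul, Finset.sum_add_distrib]
      map_smul' := fun r g => by
        change (∑ i, σ (r * g i) * X ^ (i : ℕ) : R⟦X⟧) = σ r * ∑ i, σ (g i) * X ^ (i : ℕ)
        simp only [map_mul, Finset.mul_sum, mul_assoc] }
  have hL (g : Fin q → R⟦X⟧) (m : ℕ) :
      coeff m (L g) = τ (coeff (m / q) (g ⟨m % q, Nat.mod_lt m (NeZero.pos q)⟩)) :=
    coeff_sum_map_mul_X_pow hσ g m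
  have hpos := NeZero.pos q
  have hdiv (i : Fin q) (j : ℕ) : (q * j + i) / q = j := by
    rw [add_comm, Nat.add_mul_div_left _ _ hpos, Nat.div_eq_of_lt i.isLt, zero_add]
  have hmod (i : Fin q) (j : ℕ) : (⟨(q * j + i) % q, Nat.mod_lt _ hpos⟩ : Fin q) = i :=
    Fin.ext (show (q * j + i) % q = i by rw [Nat.mul_add_mod, Nat.mod_eq_of_lt i.isLt])
  have hinj : Injective L := fun g h hgh => funext fun i => PowerSeries.ext fun j => by
    have := congrArg (coeff (q * j + i)) hgh
    rwa [hL, hL, hdiv, hmod, τ.apply_eq_iff_eq] at this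
  have hsurj : Surjective L := fun (f : R⟦X⟧) =>
    ⟨fun i => mk fun j => τ.symm (coeff (q * j + i) f), PowerSeries.ext fun m => by
      rw [hL, coeff_mk, Nat.div_add_mod, Equiv.apply_symm_apply]⟩
  exact Module.Free.of_equiv (LinearEquiv.ofBijective L ⟨hinj, hsurj⟩)

end FrobeniusLift

section Snake

variable {R : Type*} [CommRing R] {A B C : Type*} [AddCommGroup A] [Module R A]
  [AddCommGroup B] [Module R B] [AddCommGroup C] [Module R C]
  {eA : A →ₗ[R] A} {eB : B →ₗ[R] B} {eC : C →ₗ[R] C} {j : A →ₗ[R] B} {π : B →ₗ[R] C}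

lemma ker_eq_pPrim_of_comp_mkQ (hj : Injective j) (hex : Exact j π)
    (hcomm : eB ∘ₗ j = j ∘ₗ eA) {c : R} {N : ℕ} (hN : ∀ x : C, c ^ N • x = 0)
    (hsat : ∀ (m : ℕ) (y : B), c ^ m • y ∈ range eB → y ∈ range eB)
    (G : A ⧸ range eA →ₗ[R] B ⧸ range eB) (hG : G ∘ₗ (range eA).mkQ = (range eB).mkQ ∘ₗ j) :
    ker G = pPrim c (A ⧸ range eA) := by
  have hGmk (t : A) : G (Submodule.Quotient.mk t) = Submodule.Quotient.mk (j t) :=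
    LinearMap.congr_fun hG t
  ext q
  obtain ⟨t, rfl⟩ := (range eA).mkQ_surjective q
  rw [mem_ker, Submodule.mkQ_apply, hGmk, Submodule.Quotient.mk_eq_zero]
  constructor
  · rintro ⟨y, hy⟩
    obtain ⟨s, hs⟩ : c ^ N • y ∈ range j := (hex _).mp (by rw [map_smul, hN])
    refine ⟨N, ?_⟩
    have hs' : eA s = c ^ N • t := hj (by rw [← LinearMap.comp_apply, ← hcomm,
      LinearMap.comp_apply, hs, map_smul, hy, map_smul])
    rw [← Submodule.Quotient.mk_smul, Submodule.Quotient.mk_eq_zero, ← hs']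
    exact mem_range_self _ _
  · rintro ⟨m, hm⟩
    rw [← Submodule.Quotient.mk_smul, Submodule.Quotient.mk_eq_zero] at hm
    obtain ⟨s, hs⟩ := hm
    refine hsat m _ ⟨j s, ?_⟩
    rw [← LinearMap.comp_apply, hcomm, LinearMap.comp_apply, hs, map_smul]

lemma nonempty_ker_equiv_pPrim (hj : Injective j) (hπ : Surjective π) (hex : Exact j π)
    (h₁ : eB ∘ₗ j = j ∘ₗ eA) (h₂ : eC ∘ₗ π = π ∘ₗ eB) (heB : Injective eB)
    {c : R} {N : ℕ} (hN : ∀ x : C, c ^ N • x = 0)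
    (hsat : ∀ (m : ℕ) (y : B), c ^ m • y ∈ range eB → y ∈ range eB) :
    Nonempty (ker eC ≃ₗ[R] pPrim c (A ⧸ range eA)) := by
  have hjA : range eA ≤ (range eB).comap j := by
    rintro _ ⟨s, rfl⟩
    exact ⟨j s, LinearMap.congr_fun h₁ s⟩
  let G := (range eA).mapQ (range eB) j hjA
  let δ := SnakeLemma.δ' eA eB eC j π hex j π hex h₁.symm h₂.symm (ker eC).subtype
    (exact_subtype_ker_map eC) (range eA).mkQ (exact_map_mkQ_range eA) hπ hj
  have hδ : Injective δ := by
    rw [← exact_zero_iff_injective PUnit]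
    exact SnakeLemma.exact_δ'_right eA eB eC j π hex j π hex h₁.symm h₂.symm 0
      ((exact_zero_iff_injective PUnit eB).mpr heB) _ _ _ _ hπ hj 0 (by simp only [comp_zero])
      (ker eC).injective_subtype
  have hrange : range δ = ker G :=
    (SnakeLemma.exact_δ'_left eA eB eC j π hex j π hex h₁.symm h₂.symm _ _ _ _
      (range eB).mkQ (exact_map_mkQ_range eB) hπ hj G (Submodule.mapQ_mkQ _ _ _)
      (range eA).mkQ_surjective).linearMap_ker_eq.symm
  exact ⟨(LinearEquiv.ofInjective δ hδ).trans (LinearEquiv.ofEq _ _ (hrange.trans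
    (ker_eq_pPrim_of_comp_mkQ hj hex h₁ hN hsat G (Submodule.mapQ_mkQ _ _ _))))⟩

end Snake

section Twist

variable {R : Type*} [CommRing R] (ψ : R →+* R) {M N : Type*} [AddCommGroup M] [Module R M]
  [AddCommGroup N] [Module R N]

lemma twist_smul_eq_zero {c : R} (hM : ∀ m : M, c • m = 0) (x : Twist ψ M) : c • x = 0 := by
  have h0 : c • (LinearMap.id : M →ₗ[R] M) = 0 := LinearMap.ext hM
  have := congrArg (fun f => twistMap ψ f x) h0
  simp only [twistMap, LinearMap.lTensor_smul, LinearMap.lTensor_id, LinearMap.lTensor_zero] at this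
  exact this

lemma twistSMul_comp_twistMap (a : R) (f : M →ₗ[R] N) :
    twistSMul ψ a N ∘ₗ twistMap ψ f = twistMap ψ f ∘ₗ twistSMul ψ a M :=
  TensorProduct.ext' fun _ _ => rfl

lemma twistSMul_injective_s14 [Module.Flat R M] {a : R} (ha : IsLeftRegular a) :
    Injective (twistSMul ψ a M) :=
  Module.Flat.rTensor_preserves_injective_linearMap (twMulBase ψ a) ha

variable {ι : Type*} [Fintype ι] [DecidableEq ι]

variable (ι) in
lemma piScalarRight_comp_twistSMul (a : R) :
    (TensorProduct.piScalarRight R R (TwBase ψ) ι).toLinearMap ∘ₗ twistSMul ψ a (ι → R) =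
      LinearMap.piMap (fun _ => twMulBase ψ a) ∘ₗ
        (TensorProduct.piScalarRight R R (TwBase ψ) ι).toLinearMap :=
  TensorProduct.ext' fun x f => funext fun i => ((twMulBase ψ a).map_smul (f i) x).symm

lemma mem_range_twistSMul_of_smul_mem {a d : R} (h : ∀ f : R, a ∣ ψ d * f → a ∣ f)
    {z : Twist ψ (ι → R)} (hz : d • z ∈ range (twistSMul ψ a (ι → R))) :
    z ∈ range (twistSMul ψ a (ι → R)) := by
  let Θ : Twist ψ (ι → R) ≃ₗ[R] (ι → TwBase ψ) := TensorProduct.piScalarRight R R (TwBase ψ) ι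
  have hΘ (y : Twist ψ (ι → R)) (i : ι) : Θ (twistSMul ψ a (ι → R) y) i = twMulBase ψ a (Θ y i) :=
    congrFun (LinearMap.congr_fun (piScalarRight_comp_twistSMul ψ ι a) y) i
  obtain ⟨y, hy⟩ := hz
  have hdvd (i : ι) : ∃ w : TwBase ψ, Θ z i = twMulBase ψ a w := by
    refine h (Θ z i) ⟨Θ y i, ?_⟩
    have := congrFun (congrArg Θ hy) i
    rw [hΘ, map_smul] at this
    exact this.symm
  choose w hw using hdvd
  refine ⟨Θ.symm w, Θ.injective (funext fun i => ?_)⟩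
  rw [hΘ, LinearEquiv.apply_symm_apply, hw]

lemma nonempty_ker_twistSMul_equiv_pPrim [Module.Flat R (TwBase ψ)] (T : Submodule R (ι → R))
    {a c : R} (ha : IsLeftRegular a) (hc : ψ c = c)
    (hsat : ∀ (m : ℕ) (f : R), a ∣ c ^ m * f → a ∣ f) {N : ℕ}
    (hN : ∀ x : Twist ψ ((ι → R) ⧸ T), c ^ N • x = 0) :
    Nonempty (ker (twistSMul ψ a ((ι → R) ⧸ T)) ≃ₗ[R]
      pPrim c (Twist ψ T ⧸ range (twistSMul ψ a T))) :=
  nonempty_ker_equiv_pPrim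
    (Module.Flat.lTensor_preserves_injective_linearMap T.subtype T.injective_subtype)
    (LinearMap.lTensor_surjective _ T.mkQ_surjective)
    (lTensor_exact _ (LinearMap.exact_subtype_mkQ T) T.mkQ_surjective)
    (twistSMul_comp_twistMap ψ a T.subtype) (twistSMul_comp_twistMap ψ a T.mkQ)
    (twistSMul_injective_s14 ψ ha) hN
    fun m _ hy => mem_range_twistSMul_of_smul_mem ψ
      (fun f hf => hsat m f (by rwa [map_pow, hc] at hf)) hy

end Twist

theorem stmt_14_general {p : ℕ} [Fact p.Prime] {k : Type*} [Field k] [CharP k p] [PerfectField k]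
    (σ : PowerSeries (WittVector p k) →+* PowerSeries (WittVector p k))
    (hσ : ∀ (f : PowerSeries (WittVector p k)) (m : ℕ),
      PowerSeries.coeff m (σ f) =
        if p ∣ m then WittVector.frobenius (PowerSeries.coeff (m / p) f) else 0)
    (E : Polynomial (WittVector p k)) (hE : E.Monic)
    (b : ℕ)
    (T : Submodule (PowerSeries (WittVector p k)) (Fin b → PowerSeries (WittVector p k)))
    (hQ : ∃ N : ℕ,
      ∀ x ∈ (Ideal.span {(p : PowerSeries (WittVector p k)),
          (PowerSeries.X : PowerSeries (WittVector p k))}) ^ N,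
        ∀ q : (Fin b → PowerSeries (WittVector p k)) ⧸ T, x • q = 0)
    (n : ℕ) :
    let 𝔖 := PowerSeries (WittVector p k)
    let ψ := iterateHom σ n
    let Q := (Fin b → 𝔖) ⧸ T
    (∀ x ∈ LinearMap.ker (twistSMul ψ (E : 𝔖) Q), ∃ N : ℕ, (p : 𝔖) ^ N • x = 0) ∧
      Nonempty ((LinearMap.ker (twistSMul ψ (E : 𝔖) Q)) ≃ₗ[𝔖]
        (pPrim (p : 𝔖) (Twist ψ T ⧸ LinearMap.range (twistSMul ψ (E : 𝔖) T)))) := by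
  intro 𝔖 ψ Q
  obtain ⟨N, hN⟩ := hQ
  have hkill : ∀ x : Twist ψ Q, (p : 𝔖) ^ N • x = 0 := twist_smul_eq_zero ψ fun q =>
    hN _ (Ideal.pow_mem_pow (Ideal.subset_span (Set.mem_insert _ _)) N) q
  refine ⟨fun x _ => ⟨N, hkill x⟩, ?_⟩
  have : Module.Free 𝔖 (TwBase ψ) := free_twBase_of_coeff (q := p ^ n)
    (coeff_iterateHom (τ := (WittVector.frobeniusEquiv p k).toEquiv) hσ n)
  have hp : Prime (p : 𝔖) := by
    simpa using PowerSeries.prime_C (WittVector.irreducible p (k := k)).prime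
  have hpE : ¬ (p : 𝔖) ∣ E := by
    simpa using hE.not_C_dvd_coe (WittVector.irreducible p (k := k)).not_isUnit
  have hE0 : (E : 𝔖) ≠ 0 := (Polynomial.coe_eq_zero_iff.not).mpr hE.ne_zero
  exact nonempty_ker_twistSMul_equiv_pPrim ψ T (IsRegular.of_ne_zero hE0).left (map_natCast ψ p)
    (fun m _ => dvd_of_dvd_pow_mul_of_prime hp hpE m) hkill

/-- Let `k` be a perfect field of characteristic `p`, `W = W(k)`,
`𝔖 = W[[u]]` with its Frobenius lift `σ`, `E ∈ W[u]` an Eisenstein polynomial of degree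
`e`. Let `T ⊆ F` be finitely generated `𝔖`-modules with `F` free, such that `Q = F/T` is
killed by a power of the ideal `(p, u)`. Then for every `n ≥ 0` there is an isomorphism
`Q^{(n)}[E] ≅ (T^{(n)}/E)[p^∞]`, and `Q^{(n)}[E]` is entirely `p`-power torsion.
Here `N^{(n)} = 𝔖 ⊗_{𝔖,σ^n} N` (the module `Twist`, with `E` acting via `twistSMul`). -/
theorem stmt_14 {p : ℕ} [Fact p.Prime] {k : Type*} [Field k] [CharP k p] [PerfectField k]
    (σ : PowerSeries (WittVector p k) →+* PowerSeries (WittVector p k))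
    (hσ : ∀ (f : PowerSeries (WittVector p k)) (m : ℕ),
      PowerSeries.coeff m (σ f) =
        if p ∣ m then WittVector.frobenius (PowerSeries.coeff (m / p) f) else 0)
    (E : Polynomial (WittVector p k)) (e : ℕ) (hE : E.Monic) (hdeg : E.natDegree = e)
    (hco : ∀ i < e, (p : WittVector p k) ∣ E.coeff i)
    (hconst : ∃ v : (WittVector p k)ˣ, E.coeff 0 = (p : WittVector p k) * v)
    (b : ℕ)
    (T : Submodule (PowerSeries (WittVector p k)) (Fin b → PowerSeries (WittVector p k)))
    (hT : T.FG)
    (hQ : ∃ N : ℕ,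
      ∀ x ∈ (Ideal.span {(p : PowerSeries (WittVector p k)),
          (PowerSeries.X : PowerSeries (WittVector p k))}) ^ N,
        ∀ q : (Fin b → PowerSeries (WittVector p k)) ⧸ T, x • q = 0)
    (n : ℕ) :
    let 𝔖 := PowerSeries (WittVector p k)
    let ψ := iterateHom σ n
    let Q := (Fin b → 𝔖) ⧸ T
    (∀ x ∈ LinearMap.ker (twistSMul ψ (E : 𝔖) Q), ∃ N : ℕ, (p : 𝔖) ^ N • x = 0) ∧
      Nonempty ((LinearMap.ker (twistSMul ψ (E : 𝔖) Q)) ≃ₗ[𝔖]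
        (pPrim (p : 𝔖) (Twist ψ T ⧸ LinearMap.range (twistSMul ψ (E : 𝔖) T)))) :=
  stmt_14_general σ hσ E hE b T hQ n
end
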